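/- arXiv:2010.14620 — 3 statements merged into one kernel-verified Lean document; each statement's English description precedes it below -/
import Mathlib

section
/- Let c ⊆ E be a scenario and S ⊆ V a seed set. Form the auxiliary graph G' = (V ∪ {s, t}, E') with two new nodes s, t and edge set E' = {(i, j) ∈ E : (i, j) ∈ c} ∪ {(s, i) : i ∈ S} ∪ {(j, t) : j ∈ V \ S}. Let Z(c, S) be the maximum, over all flows x : E' → ℝ≥0 and values v ∈ ℝ satisfying flow conservation (net outflow v at s, net inflow v at t, net flow 0 at every node of V) and capacities x_{jt} ≤ 1 for every j ∈ V \ S, of the value v. Then the number of influenced nodes satisfies R(c, S) = |S| + Z(c, S); equivalently, Z(c, S) equals the number of nodes of V \ S reachable from S along edges of c. -/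
/-!
Let `T` be the set of influenced nodes outside `S`. Sending one unit of flow along a path
`s → S → ⋯ → j → t` for every `j ∈ T` gives a feasible flow of value `|T|`. Conversely, the net
outflow of the cut consisting of `s` and the influenced nodes equals the flow value; since live
arcs never leave the set of influenced nodes, the only arcs leaving the cut are the arcs `(j, t)`
with `j ∈ T`, each of capacity one, so every feasible value is at most `|T|`. Hence
`Z(c, S) = |T|` and `R(c, S) = |S| + |T|`.
-/

open scoped BigOperators

namespace CorrIM

variable {V : Type*} [Fintype V] [DecidableEq V]

/-- A node `i` is influenced: `i ∈ S`, or `i` is reachable from some node of `S`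
along the live edges of the scenario `c`. -/
def influenced (c : Finset (V × V)) (S : Finset V) (i : V) : Prop :=
  ∃ s ∈ S, Relation.ReflTransGen (fun a b : V => (a, b) ∈ c) s i

/-- `R c S` : the number of influenced nodes in scenario `c` with seed set `S`. -/
noncomputable def R (c : Finset (V × V)) (S : Finset V) : ℕ :=
  Set.ncard {i : V | influenced c S i}

/-- The Fréchet class `Θ` : probability distributions on scenarios (subsets of `E`)
whose marginals agree with the edge likelihoods `p`. -/
def memTheta (E : Finset (V × V)) (p : V × V → ℝ) (θ : Finset (V × V) → ℝ) : Prop :=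
  (∀ c, 0 ≤ θ c) ∧ (∀ c, θ c ≠ 0 → c ⊆ E) ∧ (∑ c : Finset (V × V), θ c) = 1 ∧
    ∀ e ∈ E, (∑ c : Finset (V × V), if e ∈ c then θ c else 0) = p e

/-- Expected number of influenced nodes under the distribution `θ`. -/
noncomputable def expInf (θ : Finset (V × V) → ℝ) (S : Finset V) : ℝ :=
  ∑ c : Finset (V × V), θ c * (R c S : ℝ)

/-- The correlation robust influence function `f^corr`. -/
noncomputable def fcorr (E : Finset (V × V)) (p : V × V → ℝ) (S : Finset V) : ℝ :=
  sInf {x : ℝ | ∃ θ, memTheta E p θ ∧ x = expInf θ S}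

open Classical in
/-- Probability of the event `A` under the distribution `θ`. -/
noncomputable def prob (θ : Finset (V × V) → ℝ) (A : Finset (V × V) → Prop) : ℝ :=
  ∑ c : Finset (V × V), if A c then θ c else 0

/-- `γ` (a list of nodes `i₀, i₁, …, i_λ`, `λ ≥ 1`) is a directed path from the
seed set `S` to the node `i` using edges of `E`. -/
def IsPathFrom (E : Finset (V × V)) (S : Finset V) (i : V) (γ : List V) : Prop :=
  2 ≤ γ.length ∧ (∃ s ∈ S, γ.head? = some s) ∧ γ.getLast? = some i ∧
    γ.Chain' (fun a b : V => (a, b) ∈ E)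

/-- The list of edges `(i₀,i₁), …, (i_{λ-1}, i_λ)` of a path `γ = [i₀, …, i_λ]`. -/
def pathEdges (γ : List V) : List (V × V) := γ.zip γ.tail

/-- The weight `L(γ) = 1 - ∑_{l=1}^{λ} (1 - p(i_{l-1}, i_l))` of a path. -/
noncomputable def L (p : V × V → ℝ) (γ : List V) : ℝ :=
  1 - ((pathEdges γ).map (fun e => 1 - p e)).sum

/-- `π*_i = max(0, max_{γ ∈ Γ(S,i)} L(γ))`, with value `0` when `Γ(S,i) = ∅`. -/
noncomputable def piStar (E : Finset (V × V)) (p : V × V → ℝ) (S : Finset V) (i : V) : ℝ :=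
  sSup (insert 0 {x : ℝ | ∃ γ : List V, IsPathFrom E S i γ ∧ x = L p γ})

/-- The independent cascade distribution `θ_ic` : each edge of `E` is live
independently with probability `p e`. -/
noncomputable def thetaIC (E : Finset (V × V)) (p : V × V → ℝ) (c : Finset (V × V)) : ℝ :=
  if c ⊆ E then (∏ e ∈ c, p e) * ∏ e ∈ E \ c, (1 - p e) else 0

/-- The independent cascade influence function `f^ic`. -/
noncomputable def fic (E : Finset (V × V)) (p : V × V → ℝ) (S : Finset V) : ℝ :=
  expInf (thetaIC E p) S


/-- The edge set `E'` of the auxiliary graph `G' = (V ∪ {s,t}, E')`, where the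
nodes are `V ⊕ Bool`, `s = Sum.inr true` and `t = Sum.inr false`. -/
def auxEdges (c : Finset (V × V)) (S : Finset V) : Finset ((V ⊕ Bool) × (V ⊕ Bool)) :=
  c.image (fun e => (Sum.inl e.1, Sum.inl e.2))
    ∪ S.image (fun i => ((Sum.inr true : V ⊕ Bool), Sum.inl i))
    ∪ (Finset.univ \ S).image (fun j => (Sum.inl j, (Sum.inr false : V ⊕ Bool)))

/-- Net outflow of the flow `x` at node `u`, counting only edges of `E'`. -/
noncomputable def netflow (E' : Finset ((V ⊕ Bool) × (V ⊕ Bool)))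
    (x : (V ⊕ Bool) × (V ⊕ Bool) → ℝ) (u : V ⊕ Bool) : ℝ :=
  ∑ e ∈ E'.filter (fun e => e.1 = u), x e - ∑ e ∈ E'.filter (fun e => e.2 = u), x e

/-- `Z c S` : the value of the max flow problem on the auxiliary graph: the maximum,
over flows `x : E' → ℝ≥0` and values `v ∈ ℝ` satisfying flow conservation (net
outflow `v` at `s`, net inflow `v` at `t`, net flow `0` at every node of `V`) and
capacities `x (j, t) ≤ 1` for `j ∈ V \ S`, of the value `v`. -/
noncomputable def Z (c : Finset (V × V)) (S : Finset V) : ℝ :=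
  sSup {v : ℝ | ∃ x : (V ⊕ Bool) × (V ⊕ Bool) → ℝ,
    (∀ e ∈ auxEdges c S, 0 ≤ x e) ∧
    (∀ j ∈ Finset.univ \ S, x (Sum.inl j, Sum.inr false) ≤ 1) ∧
    netflow (auxEdges c S) x (Sum.inr true) = v ∧
    netflow (auxEdges c S) x (Sum.inr false) = -v ∧
    (∀ i : V, netflow (auxEdges c S) x (Sum.inl i) = 0)}


section Flows

variable {W : Type*} [DecidableEq W] {E' : Finset ((W ⊕ Bool) × (W ⊕ Bool))}

lemma netflow_add (x y : (W ⊕ Bool) × (W ⊕ Bool) → ℝ) (u : W ⊕ Bool) :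
    netflow E' (x + y) u = netflow E' x u + netflow E' y u := by
  simp only [netflow, Pi.add_apply, Finset.sum_add_distrib]
  ring

lemma netflow_sum {ι : Type*} (T : Finset ι) (x : ι → (W ⊕ Bool) × (W ⊕ Bool) → ℝ)
    (u : W ⊕ Bool) : netflow E' (∑ j ∈ T, x j) u = ∑ j ∈ T, netflow E' (x j) u := by
  simp only [netflow, Finset.sum_apply, Finset.sum_sub_distrib]
  rw [Finset.sum_comm, Finset.sum_comm (s := E'.filter _)]

lemma netflow_single {e : (W ⊕ Bool) × (W ⊕ Bool)} (he : e ∈ E') (u : W ⊕ Bool) :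
    netflow E' (Pi.single e 1) u = (if e.1 = u then 1 else 0) - (if e.2 = u then 1 else 0) := by
  simp [netflow, Finset.sum_pi_single', he]

lemma exists_unit_flow_of_reflTransGen {r : W ⊕ Bool → W ⊕ Bool → Prop}
    (hr : ∀ a b, r a b → (a, b) ∈ E') {a b : W ⊕ Bool} (hab : Relation.ReflTransGen r a b) :
    ∃ x : (W ⊕ Bool) × (W ⊕ Bool) → ℝ, (∀ e, 0 ≤ x e) ∧ (∀ e, x e ≠ 0 → r e.1 e.2) ∧
      ∀ u, netflow E' x u = (if a = u then 1 else 0) - (if b = u then 1 else 0) := by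
  induction hab with
  | refl => exact ⟨0, fun _ => le_rfl, fun _ h => absurd rfl h, fun u => by simp [netflow]⟩
  | @tail b d _ hbd ih =>
    obtain ⟨x, hx0, hxr, hxnet⟩ := ih
    refine ⟨x + Pi.single (b, d) 1, fun e => ?_, fun e he => ?_, fun u => ?_⟩
    · exact add_nonneg (hx0 e) (by rw [Pi.single_apply]; split_ifs <;> norm_num)
    · by_cases h : e = (b, d)
      · subst h; exact hbd
      · exact hxr e (by simpa [h] using he)
    · rw [netflow_add, hxnet, netflow_single (hr b d hbd)]
      ring

lemma sum_netflow_eq_sum_cut (A : Finset (W ⊕ Bool)) (x : (W ⊕ Bool) × (W ⊕ Bool) → ℝ) :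
    ∑ u ∈ A, netflow E' x u
      = ∑ e ∈ E', ((if e.1 ∈ A then x e else 0) - (if e.2 ∈ A then x e else 0)) := by
  simp only [netflow, Finset.sum_filter, ← Finset.sum_sub_distrib]
  rw [Finset.sum_comm]
  refine Finset.sum_congr rfl fun e _ => ?_
  rw [Finset.sum_sub_distrib, Finset.sum_ite_eq A e.1, Finset.sum_ite_eq A e.2]

end Flows

def IsFeasibleFlow (c : Finset (V × V)) (S : Finset V)
    (x : (V ⊕ Bool) × (V ⊕ Bool) → ℝ) (v : ℝ) : Prop :=
  (∀ e ∈ auxEdges c S, 0 ≤ x e) ∧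
    (∀ j ∈ Finset.univ \ S, x (Sum.inl j, Sum.inr false) ≤ 1) ∧
    netflow (auxEdges c S) x (Sum.inr true) = v ∧
    netflow (auxEdges c S) x (Sum.inr false) = -v ∧
    (∀ i : V, netflow (auxEdges c S) x (Sum.inl i) = 0)

lemma Z_eq_sSup (c : Finset (V × V)) (S : Finset V) :
    Z c S = sSup {v : ℝ | ∃ x, IsFeasibleFlow c S x v} := rfl

open Classical in
noncomputable def influencedOutside (c : Finset (V × V)) (S : Finset V) : Finset V :=
  Finset.univ.filter fun i => i ∉ S ∧ influenced c S i

section MaxFlow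

variable {c : Finset (V × V)} {S : Finset V}

lemma mem_influencedOutside {i : V} :
    i ∈ influencedOutside c S ↔ i ∉ S ∧ influenced c S i := by
  simp [influencedOutside]

lemma mem_auxEdges {e : (V ⊕ Bool) × (V ⊕ Bool)} :
    e ∈ auxEdges c S ↔ (∃ a b, (a, b) ∈ c ∧ e = (Sum.inl a, Sum.inl b)) ∨
      (∃ i ∈ S, e = (Sum.inr true, Sum.inl i)) ∨ ∃ j ∉ S, e = (Sum.inl j, Sum.inr false) := by
  simp only [auxEdges, Finset.mem_union, Finset.mem_image, Finset.mem_sdiff, Finset.mem_univ,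
    true_and, Prod.exists, or_assoc]
  grind

lemma coe_influencedOutside :
    (influencedOutside c S : Set V) = {i | i ∉ S ∧ influenced c S i} := by
  ext i
  exact mem_influencedOutside

lemma R_eq_card_add_card : R c S = S.card + (influencedOutside c S).card := by
  have hdisj : Disjoint S (influencedOutside c S) :=
    Finset.disjoint_left.2 fun i hi hi' => (mem_influencedOutside.1 hi').1 hi
  have hunion : {i | influenced c S i} = ((S ∪ influencedOutside c S : Finset V) : Set V) := by
    ext i
    by_cases hi : i ∈ S
    · simp [hi, show influenced c S i from ⟨i, hi, .refl⟩]
    · simp [hi, mem_influencedOutside]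
  rw [R, hunion, Set.ncard_coe_finset, Finset.card_union_of_disjoint hdisj]

lemma le_card_influencedOutside {x : (V ⊕ Bool) × (V ⊕ Bool) → ℝ} {v : ℝ}
    (hx : IsFeasibleFlow c S x v) : v ≤ (influencedOutside c S).card := by
  classical
  obtain ⟨hx0, hcap, hs, -, hV⟩ := hx
  set A : Finset (V ⊕ Bool) := Finset.univ.filter (Sum.elim (influenced c S) (· = true))
  set cutArcs := (influencedOutside c S).image
    fun j => ((Sum.inl j : V ⊕ Bool), (Sum.inr false : V ⊕ Bool))
  have hA : ∑ u ∈ A, netflow (auxEdges c S) x u = v := by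
    simp [A, Finset.sum_filter, Fintype.sum_sum_type, hV, hs]
  have harc : ∀ e ∈ auxEdges c S, (if e.1 ∈ A then x e else 0) - (if e.2 ∈ A then x e else 0)
      ≤ if e ∈ cutArcs then 1 else 0 := by
    intro e he
    have hxe := hx0 e he
    rcases mem_auxEdges.1 he with ⟨a, b, hab, rfl⟩ | ⟨i, hi, rfl⟩ | ⟨j, hj, rfl⟩
    · have hb : influenced c S a → influenced c S b := fun ⟨s₀, hs₀, hsa⟩ => ⟨s₀, hs₀, hsa.tail hab⟩
      by_cases ha : influenced c S a
      · simp [A, cutArcs, ha, hb ha]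
      · by_cases hb' : influenced c S b <;> simp [A, cutArcs, ha, hb', hxe]
    · simp [A, cutArcs, show influenced c S i from ⟨i, hi, .refl⟩]
    · by_cases hjA : influenced c S j
      · have hjT : j ∈ influencedOutside c S := mem_influencedOutside.2 ⟨hj, hjA⟩
        simpa [A, cutArcs, hjA, hjT] using hcap j (by simpa using hj)
      · simp [A, cutArcs, hjA, mem_influencedOutside]
  calc v = ∑ u ∈ A, netflow (auxEdges c S) x u := hA.symm
    _ = ∑ e ∈ auxEdges c S, ((if e.1 ∈ A then x e else 0) - (if e.2 ∈ A then x e else 0)) :=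
      sum_netflow_eq_sum_cut A x
    _ ≤ ∑ e ∈ auxEdges c S, if e ∈ cutArcs then (1 : ℝ) else 0 := Finset.sum_le_sum harc
    _ = (auxEdges c S ∩ cutArcs).card := by simp [Finset.sum_ite_mem]
    _ ≤ (influencedOutside c S).card := by
      exact_mod_cast (Finset.card_le_card Finset.inter_subset_right).trans Finset.card_image_le

lemma exists_isFeasibleFlow_card_influencedOutside :
    ∃ x, IsFeasibleFlow c S x (influencedOutside c S).card := by
  classical
  set T := influencedOutside c S
  -- Paths avoiding `t` keep the flows `f j` below off the capacitated arcs `(j', t)`.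
  let r : V ⊕ Bool → V ⊕ Bool → Prop := fun a b => (a, b) ∈ auxEdges c S ∧ b ≠ Sum.inr false
  have hreach : ∀ j ∈ T, Relation.ReflTransGen r (Sum.inr true) (Sum.inl j) := by
    intro j hj
    obtain ⟨-, s, hs, hsj⟩ := mem_influencedOutside.1 hj
    refine .head ⟨mem_auxEdges.2 (Or.inr (Or.inl ⟨s, hs, rfl⟩)), Sum.inl_ne_inr⟩ ?_
    exact hsj.lift Sum.inl fun a b hab => ⟨mem_auxEdges.2 (Or.inl ⟨a, b, hab, rfl⟩), Sum.inl_ne_inr⟩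
  choose! f hf0 hfr hfnet using fun j hj =>
    exists_unit_flow_of_reflTransGen (E' := auxEdges c S) (fun _ _ h => h.1) (hreach j hj)
  have hsink : ∀ j ∉ S, ((Sum.inl j : V ⊕ Bool), (Sum.inr false : V ⊕ Bool)) ∈ auxEdges c S :=
    fun j hj => mem_auxEdges.2 (Or.inr (Or.inr ⟨j, hj, rfl⟩))
  set x := ∑ j ∈ T, (f j + Pi.single ((Sum.inl j : V ⊕ Bool), (Sum.inr false : V ⊕ Bool)) 1)
  have hnet : ∀ u, netflow (auxEdges c S) x u
      = T.card * ((if Sum.inr true = u then 1 else 0) - (if Sum.inr false = u then 1 else 0)) := by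
    intro u
    rw [netflow_sum, ← nsmul_eq_mul, ← Finset.sum_const]
    refine Finset.sum_congr rfl fun j hj => ?_
    rw [netflow_add, hfnet j hj, netflow_single (hsink j (mem_influencedOutside.1 hj).1)]
    ring
  refine ⟨x, fun e _ => ?_, fun j _ => ?_, by simp [hnet], by simp [hnet], fun i => by simp [hnet]⟩
  · simp only [x, Finset.sum_apply, Pi.add_apply]
    exact Finset.sum_nonneg fun j hj => add_nonneg (hf0 j hj e)
      (by rw [Pi.single_apply]; split_ifs <;> norm_num)
  · have hf : ∀ j' ∈ T, f j' (Sum.inl j, Sum.inr false) = 0 :=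
      fun j' hj' => by_contra fun h => (hfr j' hj' _ h).2 rfl
    simp only [x, Finset.sum_apply, Pi.add_apply, Finset.sum_add_distrib,
      Finset.sum_eq_zero hf, zero_add, Pi.single_apply, Prod.mk.injEq, Sum.inl.injEq, and_true]
    rw [Finset.sum_ite_eq]
    split_ifs <;> norm_num

lemma Z_eq_card_influencedOutside : Z c S = (influencedOutside c S).card := by
  rw [Z_eq_sSup]
  exact IsGreatest.csSup_eq ⟨exists_isFeasibleFlow_card_influencedOutside,
    fun _ ⟨_, hx⟩ => le_card_influencedOutside hx⟩

end MaxFlow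

theorem influence_eq_card_add_maxflow_general (c : Finset (V × V))
    (S : Finset V) :
    (R c S : ℝ) = (S.card : ℝ) + Z c S ∧
      Z c S = (Set.ncard {i : V | i ∉ S ∧ influenced c S i} : ℝ) := by
  rw [Z_eq_card_influencedOutside, ← coe_influencedOutside, Set.ncard_coe_finset,
    R_eq_card_add_card]
  exact ⟨by push_cast; ring, rfl⟩

/-- `R(c, S) = |S| + Z(c, S)`; equivalently, `Z(c, S)` equals the number
of nodes of `V \ S` reachable from `S` along edges of `c`. -/
theorem influence_eq_card_add_maxflow (E : Finset (V × V)) (c : Finset (V × V)) (hc : c ⊆ E)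
    (S : Finset V) :
    (R c S : ℝ) = (S.card : ℝ) + Z c S ∧
      Z c S = (Set.ncard {i : V | i ∉ S ∧ influenced c S i} : ℝ) :=
  influence_eq_card_add_maxflow_general c S

end CorrIM
end

section
/- For every θ ∈ Θ, every seed set S ⊆ V, and every node i ∈ V \ S, the probability under θ that i is influenced (i.e., θ({c : i is reachable from S along edges of c})) is at least π*_i = max(0, max_{γ ∈ Γ(S, i)} L(γ)). -/
open scoped BigOperators

/-! If every edge of a path `γ` from `S` to `i` is live, then `i` is influenced. By the union
bound, the probability that some edge of `γ` is dead is at most `∑ (1 - p e)`, whatever the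
correlation between the edges, so `i` is influenced with probability at least `L(γ)`. -/

theorem List.isChain_iff_forall_mem_zip_tail {α : Type*} {r : α → α → Prop} :
    ∀ {l : List α}, l.IsChain r ↔ ∀ e ∈ l.zip l.tail, r e.1 e.2
  | [] | [_] => by simp
  | a :: b :: l => by
    simp [List.isChain_iff_forall_mem_zip_tail (l := b :: l)]

namespace CorrIM

variable {V : Type*}

theorem IsPathFrom.forall_mem_pathEdges {E : Finset (V × V)} {S : Finset V} {i : V} {γ : List V}
    (hγ : IsPathFrom E S i γ) : ∀ e ∈ pathEdges γ, e ∈ E :=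
  List.isChain_iff_forall_mem_zip_tail.1 hγ.2.2.2

theorem IsPathFrom.influenced {E c : Finset (V × V)} {S : Finset V} {i : V} {γ : List V}
    (hγ : IsPathFrom E S i γ) (hlive : ∀ e ∈ pathEdges γ, e ∈ c) : influenced c S i := by
  obtain ⟨hlen, ⟨s, hs, hhead⟩, hlast, -⟩ := hγ
  have hne : γ ≠ [] := List.ne_nil_of_length_pos (by omega)
  have hchain : γ.IsChain fun a b => (a, b) ∈ c := List.isChain_iff_forall_mem_zip_tail.2 hlive
  have hs' : γ.head hne = s := by simpa [List.head?_eq_some_head hne] using hhead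
  have hi' : γ.getLast hne = i := by simpa [List.getLast?_eq_some_getLast hne] using hlast
  exact ⟨s, hs, hs' ▸ hi' ▸ List.relationReflTransGen_of_exists_isChain γ hchain hne⟩

variable [Fintype V]

section Prob

variable {θ : Finset (V × V) → ℝ}

theorem prob_nonneg (h0 : ∀ c, 0 ≤ θ c) (A : Finset (V × V) → Prop) : 0 ≤ prob θ A :=
  Finset.sum_nonneg fun c _ => by split_ifs <;> simp [h0 c]

theorem prob_mono (h0 : ∀ c, 0 ≤ θ c) {A B : Finset (V × V) → Prop} (h : ∀ c, A c → B c) :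
    prob θ A ≤ prob θ B :=
  Finset.sum_le_sum fun c _ => by
    by_cases hA : A c
    · simp [hA, h c hA]
    · split_ifs <;> simp [h0 c]

theorem prob_or_le (h0 : ∀ c, 0 ≤ θ c) (A B : Finset (V × V) → Prop) :
    prob θ (fun c => A c ∨ B c) ≤ prob θ A + prob θ B := by
  rw [prob, prob, prob, ← Finset.sum_add_distrib]
  refine Finset.sum_le_sum fun c _ => ?_
  by_cases hA : A c <;> by_cases hB : B c <;> simp [hA, hB, h0 c]

theorem prob_exists_mem_le_sum (h0 : ∀ c, 0 ≤ θ c) {α : Type*} (A : α → Finset (V × V) → Prop) :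
    ∀ l : List α, prob θ (fun c => ∃ x ∈ l, A x c) ≤ (l.map fun x => prob θ (A x)).sum
  | [] => by simp [prob]
  | x :: l => by
    calc prob θ (fun c => ∃ y ∈ x :: l, A y c)
        ≤ prob θ (fun c => A x c ∨ ∃ y ∈ l, A y c) := prob_mono h0 fun c => by simp
      _ ≤ prob θ (A x) + prob θ (fun c => ∃ y ∈ l, A y c) := prob_or_le h0 _ _
      _ ≤ ((x :: l).map fun y => prob θ (A y)).sum := by
        simpa using prob_exists_mem_le_sum h0 A l

theorem prob_not (hsum : ∑ c, θ c = 1) (A : Finset (V × V) → Prop) :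
    prob θ (fun c => ¬ A c) = 1 - prob θ A := by
  rw [eq_sub_iff_add_eq, prob, prob, ← Finset.sum_add_distrib, ← hsum]
  exact Finset.sum_congr rfl fun c _ => by by_cases h : A c <;> simp [h]

end Prob

variable [DecidableEq V]

namespace memTheta

variable {E : Finset (V × V)} {p : V × V → ℝ} {θ : Finset (V × V) → ℝ}

theorem prob_mem (hθ : memTheta E p θ) {e : V × V} (he : e ∈ E) :
    prob θ (fun c => e ∈ c) = p e :=
  (Finset.sum_congr rfl fun _ _ => by congr).trans (hθ.2.2.2 e he)

theorem one_sub_sum_le_prob_forall_mem (hθ : memTheta E p θ) {l : List (V × V)}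
    (hl : ∀ e ∈ l, e ∈ E) :
    1 - (l.map fun e => 1 - p e).sum ≤ prob θ (fun c => ∀ e ∈ l, e ∈ c) := by
  have hdead : prob θ (fun c => ¬ ∀ e ∈ l, e ∈ c) ≤ (l.map fun e => 1 - p e).sum :=
    calc prob θ (fun c => ¬ ∀ e ∈ l, e ∈ c)
        ≤ (l.map fun e => prob θ (fun c => e ∉ c)).sum := by
          simpa only [not_forall, exists_prop] using prob_exists_mem_le_sum hθ.1 _ l
      _ = (l.map fun e => 1 - p e).sum := by
          congr 1
          exact List.map_congr_left fun e he => by rw [prob_not hθ.2.2.1, hθ.prob_mem (hl e he)]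
  linarith [prob_not hθ.2.2.1 (fun c => ∀ e ∈ l, e ∈ c)]

theorem L_le_prob_influenced (hθ : memTheta E p θ) {S : Finset V} {i : V} {γ : List V}
    (hγ : IsPathFrom E S i γ) : L p γ ≤ prob θ (fun c => influenced c S i) :=
  (hθ.one_sub_sum_le_prob_forall_mem hγ.forall_mem_pathEdges).trans
    (prob_mono hθ.1 fun _ => hγ.influenced)

end memTheta

theorem influence_prob_ge_piStar_general (E : Finset (V × V)) (p : V × V → ℝ)
    (θ : Finset (V × V) → ℝ) (hθ : memTheta E p θ)
    (S : Finset V) (i : V) :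
    piStar E p S i ≤ prob θ (fun c => influenced c S i) := by
  refine csSup_le ⟨0, Set.mem_insert 0 _⟩ ?_
  rintro x (rfl | ⟨γ, hγ, rfl⟩)
  · exact prob_nonneg hθ.1 _
  · exact hθ.L_le_prob_influenced hγ

/-- for every `θ ∈ Θ`, every seed set `S` and every `i ∈ V \ S`, the
probability under `θ` that `i` is influenced is at least `π*_i`. -/
theorem influence_prob_ge_piStar (E : Finset (V × V)) (p : V × V → ℝ)
    (hp : ∀ e ∈ E, 0 ≤ p e ∧ p e ≤ 1)
    (θ : Finset (V × V) → ℝ) (hθ : memTheta E p θ)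
    (S : Finset V) (i : V) (hi : i ∉ S) :
    piStar E p S i ≤ prob θ (fun c => influenced c S i) :=
  influence_prob_ge_piStar_general E p θ hθ S i

end CorrIM
end

section
/- For every seed set S ⊆ V, the linear program min { Σ_{i ∈ V \ S} π_i : π : V → [0,1], π_i = 1 for all i ∈ S, π_i − π_j ≤ 1 − p(i, j) for every edge (i, j) ∈ E } has a unique optimal solution on V \ S, and it is given by π_i = π*_i = max(0, max_{γ ∈ Γ(S, i)} L(γ)) for every i ∈ V \ S; in particular every feasible π satisfies π_i ≥ π*_i for all i ∈ V \ S. -/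
open scoped BigOperators

namespace CorrIM

variable {V : Type*} [Fintype V] [DecidableEq V]

/-- Feasibility for the linear program of Theorem 2:
`π : V → [0,1]`, `π i = 1` for `i ∈ S`, and `π i - π j ≤ 1 - p (i,j)` for `(i,j) ∈ E`. -/
def LPfeasible (E : Finset (V × V)) (p : V × V → ℝ) (S : Finset V) (x : V → ℝ) : Prop :=
  (∀ i, 0 ≤ x i ∧ x i ≤ 1) ∧ (∀ i ∈ S, x i = 1) ∧ ∀ e ∈ E, x e.1 - x e.2 ≤ 1 - p e

/-!
The edge constraints telescope along any path `γ` from `S` to `i`, so every feasible `π`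
satisfies `π i ≥ L γ`, hence `π i ≥ π*_i`. Conversely, `π*` (extended by `1` on `S`) is
feasible, because appending an edge `(i, j)` to a path to `i` yields a path to `j` of weight
lower by exactly `1 - p (i, j)`. A feasible pointwise lower bound is the unique minimizer of
the sum.
-/

section Paths

variable {α : Type*}

@[simp]
theorem pathEdges_cons_cons (a b : α) (t : List α) :
    pathEdges (a :: b :: t) = (a, b) :: pathEdges (b :: t) := rfl

theorem pathEdges_append_singleton {γ : List α} {i : α} (hγ : γ.getLast? = some i) (j : α) :
    pathEdges (γ ++ [j]) = pathEdges γ ++ [(i, j)] := by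
  induction γ with
  | nil => simp at hγ
  | cons a t ih =>
    cases t with
    | nil => simp_all [pathEdges]
    | cons b t => simp_all

theorem sub_sum_pathEdges_le {r : α → α → Prop} {x : α → ℝ} {w : α × α → ℝ}
    (hx : ∀ a b, r a b → x a - x b ≤ w (a, b)) {γ : List α} (hγ : γ.IsChain r) {a b : α}
    (ha : γ.head? = some a) (hb : γ.getLast? = some b) :
    x a - ((pathEdges γ).map w).sum ≤ x b := by
  induction hγ generalizing a with
  | nil => simp at ha
  | singleton c => simp_all [pathEdges]
  | @cons_cons c d t hcd _ ih =>
    obtain rfl : c = a := by simpa using ha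
    have hstep := hx c d hcd
    have hrest := ih rfl (by simpa [List.getLast?_cons_cons] using hb)
    simp only [pathEdges_cons_cons, List.map_cons, List.sum_cons]
    linarith

theorem L_append_singleton (p : α × α → ℝ) {γ : List α} {i : α} (hγ : γ.getLast? = some i)
    (j : α) : L p (γ ++ [j]) = L p γ - (1 - p (i, j)) := by
  simp only [L, pathEdges_append_singleton hγ, List.map_append, List.sum_append,
    List.map_singleton, List.sum_singleton]
  ring

theorem IsPathFrom.append_singleton {E : Finset (α × α)} {S : Finset α} {i j : α}
    {γ : List α} (hγ : IsPathFrom E S i γ) (hij : (i, j) ∈ E) :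
    IsPathFrom E S j (γ ++ [j]) := by
  obtain ⟨hlen, ⟨s, hs, hhead⟩, hlast, hchain⟩ := hγ
  refine ⟨by simp; omega, ⟨s, hs, ?_⟩, by simp, ?_⟩
  · cases γ with
    | nil => simp at hhead
    | cons a t => simpa using hhead
  · refine List.isChain_append.2 ⟨hchain, List.isChain_singleton j, ?_⟩
    intro a ha b hb
    simp_all

theorem isPathFrom_pair {E : Finset (α × α)} {S : Finset α} {i j : α} (hi : i ∈ S)
    (hij : (i, j) ∈ E) : IsPathFrom E S j [i, j] :=
  ⟨le_rfl, ⟨i, hi, rfl⟩, rfl, List.isChain_pair.2 hij⟩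

theorem LPfeasible.L_le {E : Finset (α × α)} {p : α × α → ℝ} {S : Finset α} {x : α → ℝ}
    (hx : LPfeasible E p S x) {i : α} {γ : List α} (hγ : IsPathFrom E S i γ) :
    L p γ ≤ x i := by
  obtain ⟨-, ⟨s, hs, hhead⟩, hlast, hchain⟩ := hγ
  have := sub_sum_pathEdges_le (x := x) (w := fun e => 1 - p e) (fun a b h => hx.2.2 (a, b) h)
    hchain hhead hlast
  rwa [hx.2.1 s hs] at this

theorem L_le_one {E : Finset (α × α)} {p : α × α → ℝ} (hp : ∀ e ∈ E, p e ≤ 1) {S : Finset α}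
    {i : α} {γ : List α} (hγ : IsPathFrom E S i γ) : L p γ ≤ 1 :=
  LPfeasible.L_le (x := fun _ => 1)
    ⟨fun _ => ⟨zero_le_one, le_rfl⟩, fun _ _ => rfl, fun e he => by simpa using hp e he⟩ hγ

end Paths

section PiStar

variable {α : Type*} {E : Finset (α × α)} {p : α × α → ℝ} {S : Finset α}

theorem piStar_bddAbove (hp : ∀ e ∈ E, p e ≤ 1) (i : α) :
    BddAbove (insert 0 {x : ℝ | ∃ γ : List α, IsPathFrom E S i γ ∧ x = L p γ}) := by
  refine ⟨1, ?_⟩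
  rintro y (rfl | ⟨γ, hγ, rfl⟩)
  · exact zero_le_one
  · exact L_le_one hp hγ

theorem piStar_nonneg (hp : ∀ e ∈ E, p e ≤ 1) (i : α) : 0 ≤ piStar E p S i :=
  le_csSup (piStar_bddAbove hp i) (Set.mem_insert 0 _)

theorem L_le_piStar (hp : ∀ e ∈ E, p e ≤ 1) {i : α} {γ : List α} (hγ : IsPathFrom E S i γ) :
    L p γ ≤ piStar E p S i :=
  le_csSup (piStar_bddAbove hp i) (Set.mem_insert_of_mem _ ⟨γ, hγ, rfl⟩)

theorem piStar_le {i : α} {c : ℝ} (hc : 0 ≤ c) (hL : ∀ γ, IsPathFrom E S i γ → L p γ ≤ c) :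
    piStar E p S i ≤ c := by
  apply csSup_le (Set.insert_nonempty _ _)
  rintro y (rfl | ⟨γ, hγ, rfl⟩)
  · exact hc
  · exact hL γ hγ

theorem piStar_le_one (hp : ∀ e ∈ E, p e ≤ 1) (i : α) : piStar E p S i ≤ 1 :=
  piStar_le zero_le_one fun _ hγ => L_le_one hp hγ

theorem LPfeasible.piStar_le {x : α → ℝ} (hx : LPfeasible E p S x) (i : α) :
    piStar E p S i ≤ x i :=
  CorrIM.piStar_le (hx.1 i).1 fun _ hγ => hx.L_le hγ

theorem p_le_piStar (hp : ∀ e ∈ E, p e ≤ 1) {i j : α} (hi : i ∈ S) (hij : (i, j) ∈ E) :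
    p (i, j) ≤ piStar E p S j := by
  simpa [L, pathEdges] using L_le_piStar hp (isPathFrom_pair hi hij)

theorem piStar_sub_le (hp : ∀ e ∈ E, p e ≤ 1) {i j : α} (hij : (i, j) ∈ E) :
    piStar E p S i - piStar E p S j ≤ 1 - p (i, j) := by
  suffices piStar E p S i ≤ piStar E p S j + (1 - p (i, j)) by linarith
  refine piStar_le (by linarith [piStar_nonneg (S := S) hp j, hp _ hij]) fun γ hγ => ?_
  have := L_le_piStar hp (hγ.append_singleton hij)
  rw [L_append_singleton p hγ.2.2.1] at this
  linarith

theorem lpFeasible_ite_piStar [DecidableEq α] (hp : ∀ e ∈ E, p e ≤ 1) :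
    LPfeasible E p S (fun i => if i ∈ S then 1 else piStar E p S i) := by
  refine ⟨fun i => ?_, fun i hi => if_pos hi, fun ⟨i, j⟩ hij => ?_⟩
  · dsimp only
    split_ifs
    · exact ⟨zero_le_one, le_rfl⟩
    · exact ⟨piStar_nonneg hp i, piStar_le_one hp i⟩
  · have hpij := hp _ hij
    dsimp only
    split_ifs with hi hj hj
    · linarith
    · linarith [p_le_piStar hp hi hij]
    · linarith [piStar_le_one (S := S) hp i]
    · exact piStar_sub_le hp hij

end PiStar

/-- the LP has a unique optimal solution on `V \ S`, given by `π*`: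
the extension of `π*` by `1` on `S` is feasible, every feasible `π` satisfies
`π_i ≥ π*_i` on `V \ S`, and any feasible `π` attaining the optimal objective value
agrees with `π*` on `V \ S`. -/
theorem LP_unique_optimal_solution (E : Finset (V × V)) (p : V × V → ℝ)
    (hp : ∀ e ∈ E, 0 ≤ p e ∧ p e ≤ 1) (S : Finset V) :
    LPfeasible E p S (fun i => if i ∈ S then 1 else piStar E p S i) ∧
      (∀ x : V → ℝ, LPfeasible E p S x → ∀ i ∈ Finset.univ \ S, piStar E p S i ≤ x i) ∧
      (∀ x : V → ℝ, LPfeasible E p S x →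
        (∑ i ∈ Finset.univ \ S, x i) = (∑ i ∈ Finset.univ \ S, piStar E p S i) →
        ∀ i ∈ Finset.univ \ S, x i = piStar E p S i) := by
  have hp' : ∀ e ∈ E, p e ≤ 1 := fun e he => (hp e he).2
  refine ⟨lpFeasible_ite_piStar hp', fun x hx i _ => hx.piStar_le i, fun x hx hsum i hi => ?_⟩
  exact ((Finset.sum_eq_sum_iff_of_le fun j _ => hx.piStar_le j).1 hsum.symm i hi).symm

end CorrIM
end
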